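/- arXiv:1906.07781 — 4 statements merged into one kernel-verified Lean document; each statement's English description precedes it below -/
import Mathlib

section
/- With the notation of the previous statement, cᵀ q ≤ (cᵀ x + bᵀ p)/2, i.e., the cost of the minimum energy solution q is at most the average of cᵀ x and bᵀ p. -/
/-!
Put `s = Aᵀ p`. Since `A R⁻¹ Aᵀ` is symmetric, `bᵀ p = pᵀ (A R⁻¹ Aᵀ) p = ∑ᵢ (xᵢ / cᵢ) sᵢ²`,
while `cᵀ q = ∑ᵢ xᵢ sᵢ`. The claim is then the sum over `i` of the AM-GM inequality
`2 xᵢ sᵢ ≤ cᵢ xᵢ + (xᵢ / cᵢ) sᵢ²`.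
-/

open Matrix

section

variable {ι κ : Type*} [Fintype ι] [DecidableEq ι] [Fintype κ] {R : Type*} [CommRing R]

theorem Matrix.nonsing_inv_mul_mul_nonsing_inv (M : Matrix ι ι R) : M⁻¹ * M * M⁻¹ = M⁻¹ := by
  by_cases h : IsUnit M.det
  · rw [nonsing_inv_mul M h, Matrix.one_mul]
  · rw [nonsing_inv_apply_not_isUnit M h, Matrix.mul_zero]

/-- Holds also for singular `M`, where Mathlib's `M⁻¹` is `0`. -/
theorem Matrix.dotProduct_nonsing_inv_mulVec {M : Matrix ι ι R} (hM : Mᵀ = M) (b : ι → R) :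
    b ⬝ᵥ (M⁻¹ *ᵥ b) = (M⁻¹ *ᵥ b) ⬝ᵥ (M *ᵥ (M⁻¹ *ᵥ b)) := by
  have hinv : M⁻¹ᵀ = M⁻¹ := by rw [transpose_nonsing_inv, hM]
  calc b ⬝ᵥ (M⁻¹ *ᵥ b) = b ⬝ᵥ (M⁻¹ *ᵥ ((M * M⁻¹) *ᵥ b)) := by
        rw [mulVec_mulVec, ← Matrix.mul_assoc, nonsing_inv_mul_mul_nonsing_inv]
    _ = (M⁻¹ᵀ *ᵥ b) ⬝ᵥ ((M * M⁻¹) *ᵥ b) := by rw [dotProduct_mulVec, mulVec_transpose]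
    _ = (M⁻¹ *ᵥ b) ⬝ᵥ (M *ᵥ (M⁻¹ *ᵥ b)) := by rw [hinv, mulVec_mulVec]

theorem Matrix.dotProduct_mul_diagonal_mul_transpose_mulVec (A : Matrix κ ι R) (d : ι → R)
    (v : κ → R) : v ⬝ᵥ ((A * diagonal d * Aᵀ) *ᵥ v) = ∑ i, d i * (Aᵀ *ᵥ v) i ^ 2 := by
  rw [← mulVec_mulVec, ← mulVec_mulVec, dotProduct_mulVec v A, ← mulVec_transpose]
  simp only [dotProduct, mulVec_diagonal]
  exact Finset.sum_congr rfl fun i _ => by ring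

end

theorem mul_le_add_div_mul_sq_div_two {c x : ℝ} (hc : 0 < c) (hx : 0 ≤ x) (s : ℝ) :
    x * s ≤ (c * x + x / c * s ^ 2) / 2 := by
  have hsq : 0 ≤ x / c * (c - s) ^ 2 := by positivity
  have hexp : x / c * (c - s) ^ 2 = c * x - 2 * (x * s) + x / c * s ^ 2 := by
    field_simp
    ring
  linarith

theorem stmt_4_general {n m : ℕ} (A : Matrix (Fin n) (Fin m) ℝ) (b : Fin n → ℝ)
    (c x : Fin m → ℝ) (hc : ∀ i, 0 < c i) (hx : ∀ i, 0 < x i)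
    (Rinv : Matrix (Fin m) (Fin m) ℝ)
    (hRinv : Rinv = Matrix.diagonal fun i => (c i / x i)⁻¹)
    (p : Fin n → ℝ) (hp : p = (A * Rinv * Aᵀ)⁻¹ *ᵥ b)
    (q : Fin m → ℝ) (hq : q = Rinv *ᵥ (Aᵀ *ᵥ p)) :
    
    c ⬝ᵥ q ≤ (c ⬝ᵥ x + b ⬝ᵥ p) / 2 := by
  have hsymm : (A * Rinv * Aᵀ)ᵀ = A * Rinv * Aᵀ := by
    rw [transpose_mul, transpose_mul, transpose_transpose, hRinv, diagonal_transpose,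
      Matrix.mul_assoc]
  have hbp : b ⬝ᵥ p = ∑ i, x i / c i * (Aᵀ *ᵥ p) i ^ 2 := by
    rw [hp, dotProduct_nonsing_inv_mulVec hsymm, ← hp, hRinv,
      dotProduct_mul_diagonal_mul_transpose_mulVec]
    simp only [inv_div]
  have hcq : c ⬝ᵥ q = ∑ i, x i * (Aᵀ *ᵥ p) i := by
    simp only [hq, hRinv, dotProduct, mulVec_diagonal]
    refine Finset.sum_congr rfl fun i _ => ?_
    field_simp [(hc i).ne']
  rw [hcq, hbp, dotProduct, ← Finset.sum_add_distrib, Finset.sum_div]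
  exact Finset.sum_le_sum fun i _ => mul_le_add_div_mul_sq_div_two (hc i) (hx i).le _

theorem stmt_4 {n m : ℕ} (A : Matrix (Fin n) (Fin m) ℝ) (b : Fin n → ℝ)
    (c x : Fin m → ℝ) (hc : ∀ i, 0 < c i) (hx : ∀ i, 0 < x i) (hA : A.rank = n)
    (R Rinv : Matrix (Fin m) (Fin m) ℝ)
    (hR : R = Matrix.diagonal fun i => c i / x i)
    (hRinv : Rinv = Matrix.diagonal fun i => (c i / x i)⁻¹)
    (p : Fin n → ℝ) (hp : p = (A * Rinv * Aᵀ)⁻¹ *ᵥ b)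
    (q : Fin m → ℝ) (hq : q = Rinv *ᵥ (Aᵀ *ᵥ p)) :
    
    c ⬝ᵥ q ≤ (c ⬝ᵥ x + b ⬝ᵥ p) / 2 :=
  stmt_4_general A b c x hc hx Rinv hRinv p hp q hq
end

section
/- Let q(x) be the minimum energy solution with resistances cᵢ/xᵢ and let x* be any feasible solution of Ax = b with x* ≥ 0. Then Σᵢ x*ᵢ · (cᵢ/xᵢ) · qᵢ(x) = bᵀ p = q(x)ᵀ R q(x) ≥ 0, where p is the potential vector. -/
/-!
With `M = A R⁻¹ Aᵀ`, the flow `q = R⁻¹ Aᵀ p` satisfies `R q = Aᵀ p` and `A q = M p`. Pairing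
`R q = Aᵀ p` with `x*` and using `A x* = b` gives the first identity; pairing it with `q` gives
`qᵀ R q = pᵀ M p`, and `pᵀ M p = bᵀ M⁻¹ M M⁻¹ b = bᵀ p` because `M` is symmetric. The energy
`qᵀ R q` is nonnegative since `R` is a positive diagonal matrix.
-/

open Matrix

namespace Matrix

variable {ι κ α : Type*} [CommRing α]

theorem IsSymm.mul_mul_transpose [Fintype κ] {D : Matrix κ κ α} (hD : D.IsSymm)
    (A : Matrix ι κ α) : (A * D * Aᵀ).IsSymm := by
  simp only [IsSymm, transpose_mul, transpose_transpose, hD.eq, Matrix.mul_assoc]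

variable [Fintype ι] [DecidableEq ι]

/-- Holds also for singular `M`, where Mathlib's `M⁻¹` is `0`. -/
theorem nonsing_inv_mul_mul_nonsing_inv_s5 (M : Matrix ι ι α) : M⁻¹ * M * M⁻¹ = M⁻¹ := by
  by_cases h : IsUnit M.det
  · rw [nonsing_inv_mul M h, Matrix.one_mul]
  · simp [nonsing_inv_apply_not_isUnit M h]

theorem IsSymm.nonsing_inv_mulVec_dotProduct_mulVec {M : Matrix ι ι α} (hM : M.IsSymm)
    (b : ι → α) : (M⁻¹ *ᵥ b) ⬝ᵥ (M *ᵥ (M⁻¹ *ᵥ b)) = b ⬝ᵥ (M⁻¹ *ᵥ b) := by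
  rw [dotProduct_comm, ← dotProduct_transpose_mulVec, hM.inv.eq, mulVec_mulVec, mulVec_mulVec,
    nonsing_inv_mul_mul_nonsing_inv_s5]

end Matrix

theorem stmt_5_general {n m : ℕ} (A : Matrix (Fin n) (Fin m) ℝ) (b : Fin n → ℝ)
    (c x : Fin m → ℝ) (hc : ∀ i, 0 < c i) (hx : ∀ i, 0 < x i)
    (R Rinv : Matrix (Fin m) (Fin m) ℝ)
    (hR : R = Matrix.diagonal fun i => c i / x i)
    (hRinv : Rinv = Matrix.diagonal fun i => (c i / x i)⁻¹)
    (p : Fin n → ℝ) (hp : p = (A * Rinv * Aᵀ)⁻¹ *ᵥ b)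
    (q : Fin m → ℝ) (hq : q = Rinv *ᵥ (Aᵀ *ᵥ p))
    (xstar : Fin m → ℝ)
    (hxstar_feas : A *ᵥ xstar = b) :
    (∑ i, xstar i * (c i / x i) * q i) = b ⬝ᵥ p ∧
    b ⬝ᵥ p = q ⬝ᵥ (R *ᵥ q) ∧
    0 ≤ b ⬝ᵥ p := by
  have hr : ∀ i, 0 < c i / x i := fun i => div_pos (hc i) (hx i)
  have hRq : R *ᵥ q = Aᵀ *ᵥ p := by
    have hRRinv : R * Rinv = 1 := by
      rw [hR, hRinv, diagonal_mul_diagonal, ← diagonal_one]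
      exact congrArg diagonal (funext fun i => mul_inv_cancel₀ (hr i).ne')
    rw [hq, mulVec_mulVec, hRRinv, one_mulVec]
  have hAq : A *ᵥ q = (A * Rinv * Aᵀ) *ᵥ p := by
    rw [hq, mulVec_mulVec, mulVec_mulVec, Matrix.mul_assoc]
  have hM : (A * Rinv * Aᵀ).IsSymm := (hRinv ▸ isSymm_diagonal _).mul_mul_transpose A
  have h_energy : b ⬝ᵥ p = q ⬝ᵥ (R *ᵥ q) := by
    rw [hRq, dotProduct_transpose_mulVec, hAq, hp, hM.nonsing_inv_mulVec_dotProduct_mulVec]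
  refine ⟨?_, h_energy, ?_⟩
  · calc ∑ i, xstar i * (c i / x i) * q i = xstar ⬝ᵥ (R *ᵥ q) := by
          simp only [hR, mulVec_diagonal, dotProduct, mul_assoc]
      _ = b ⬝ᵥ p := by
          rw [hRq, dotProduct_transpose_mulVec, hxstar_feas, dotProduct_comm]
  · rw [h_energy, hR, ← star_trivial q]
    exact (posSemidef_diagonal_iff.mpr fun i => (hr i).le).dotProduct_mulVec_nonneg q

theorem stmt_5 {n m : ℕ} (A : Matrix (Fin n) (Fin m) ℝ) (b : Fin n → ℝ)
    (c x : Fin m → ℝ) (hc : ∀ i, 0 < c i) (hx : ∀ i, 0 < x i) (hA : A.rank = n)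
    (R Rinv : Matrix (Fin m) (Fin m) ℝ)
    (hR : R = Matrix.diagonal fun i => c i / x i)
    (hRinv : Rinv = Matrix.diagonal fun i => (c i / x i)⁻¹)
    (p : Fin n → ℝ) (hp : p = (A * Rinv * Aᵀ)⁻¹ *ᵥ b)
    (q : Fin m → ℝ) (hq : q = Rinv *ᵥ (Aᵀ *ᵥ p))
    (xstar : Fin m → ℝ) (hxstar_nonneg : ∀ i, 0 ≤ xstar i)
    (hxstar_feas : A *ᵥ xstar = b) :
    (∑ i, xstar i * (c i / x i) * q i) = b ⬝ᵥ p ∧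
    b ⬝ᵥ p = q ⬝ᵥ (R *ᵥ q) ∧
    0 ≤ b ⬝ᵥ p :=
  stmt_5_general A b c x hc hx R Rinv hR hRinv p hp q hq xstar hxstar_feas
end

section
/- Let x : [0,∞) → ℝ^m_{>0} be a solution of the non-uniform Physarum dynamics ẋ = D(q(x) − x), let x* ≥ 0 be an optimal solution of the LP min cᵀx s.t. Ax = b, x ≥ 0, with support I, and define V(x) = 2 cᵀ D⁻¹ x − Σ_{i∈I} (cᵢ x*ᵢ / dᵢ) ln xᵢ. Then d/dt V(x(t)) = 2(cᵀ q(t) − cᵀ x(t)) + cᵀ x* − bᵀ p(t), where p(t) is the potential vector of the minimum energy solution q(t). -/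
/-!
Differentiate `V` along the flow term by term. The linear part contributes `2 cᵀ(q - x)`, since
`D⁻¹` cancels the factor `D` of the dynamics. In the logarithmic part the `i`-th term has derivative
`(cᵢ x*ᵢ / xᵢ)(qᵢ - xᵢ)`, and `cᵢ qᵢ / xᵢ = (Aᵀ p)ᵢ` by the definition of `q`. Since `x*` vanishes
off `I`, the sum over `I` is `x*ᵀ(Aᵀ p - c) = (A x*)ᵀ p - cᵀ x* = bᵀ p - cᵀ x*`.
-/

open Matrix Finset

section Lyapunov

variable {ι : Type*} [Fintype ι]

noncomputable def physarumLyapunov (c d xstar : ι → ℝ) (I : Finset ι) (y : ι → ℝ) : ℝ :=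
  2 * ∑ i, c i * y i / d i - ∑ i ∈ I, (c i * xstar i / d i) * Real.log (y i)

theorem hasDerivAt_physarumLyapunov {c d xstar : ι → ℝ} {I : Finset ι} {x : ℝ → ι → ℝ}
    {x' : ι → ℝ} {t : ℝ} (hx : HasDerivAt x x' t) (hpos : ∀ i ∈ I, x t i ≠ 0) :
    HasDerivAt (fun τ => physarumLyapunov c d xstar I (x τ))
      (2 * ∑ i, c i * x' i / d i - ∑ i ∈ I, c i * xstar i / d i * (x' i / x t i)) t := by
  have hxi := hasDerivAt_pi.mp hx
  have hlin : HasDerivAt (fun τ => ∑ i, c i * x τ i / d i) (∑ i, c i * x' i / d i) t :=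
    HasDerivAt.fun_sum fun i _ => ((hxi i).const_mul (c i)).div_const (d i)
  have hlog : HasDerivAt (fun τ => ∑ i ∈ I, (c i * xstar i / d i) * Real.log (x τ i))
      (∑ i ∈ I, c i * xstar i / d i * (x' i / x t i)) t :=
    HasDerivAt.fun_sum fun i hi => ((hxi i).log (hpos i hi)).const_mul _
  exact (hlin.const_mul 2).sub hlog

end Lyapunov

theorem sum_mul_eq_dotProduct_of_support {ι : Type*} [Fintype ι] {v : ι → ℝ} {I : Finset ι}
    (hI : ∀ i, i ∈ I ↔ v i ≠ 0) (g : ι → ℝ) : ∑ i ∈ I, v i * g i = v ⬝ᵥ g := by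
  refine Finset.sum_subset (subset_univ I) fun i _ hi => ?_
  rw [not_not.mp ((not_congr (hI i)).mp hi), zero_mul]

theorem div_mul_diagonal_inv_div_mulVec {ι : Type*} [Fintype ι] [DecidableEq ι]
    {c x : ι → ℝ} (hc : ∀ i, c i ≠ 0) (hx : ∀ i, x i ≠ 0) (v : ι → ℝ) (i : ι) :
    c i / x i * ((diagonal fun j => (c j / x j)⁻¹) *ᵥ v) i = v i := by
  rw [mulVec_diagonal, ← mul_assoc, mul_inv_cancel₀ (div_ne_zero (hc i) (hx i)), one_mul]

theorem stmt_10_general {n m : ℕ} (A : Matrix (Fin n) (Fin m) ℝ) (b : Fin n → ℝ)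
    (c d : Fin m → ℝ) (hc : ∀ i, 0 < c i) (hd : ∀ i, 0 < d i)
    (xstar : Fin m → ℝ)
    (hxstar_feas : A *ᵥ xstar = b)
    (I : Finset (Fin m)) (hI : ∀ i, i ∈ I ↔ xstar i ≠ 0)
    (x : ℝ → (Fin m → ℝ)) (hxpos : ∀ t, ∀ i, 0 < x t i)
    (p : ℝ → (Fin n → ℝ)) (q : ℝ → (Fin m → ℝ))
    (hq : ∀ t, q t = (Matrix.diagonal fun i => (c i / x t i)⁻¹) *ᵥ (Aᵀ *ᵥ p t))
    (hode : ∀ t, HasDerivAt x (fun i => d i * (q t i - x t i)) t)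
    (V : (Fin m → ℝ) → ℝ)
    (hV : ∀ y : Fin m → ℝ,
      V y = 2 * ∑ i, c i * y i / d i - ∑ i ∈ I, (c i * xstar i / d i) * Real.log (y i)) :
    ∀ t, HasDerivAt (fun s => V (x s))
      (2 * (c ⬝ᵥ q t - c ⬝ᵥ x t) + c ⬝ᵥ xstar - b ⬝ᵥ p t) t := by
  intro t
  have hflow : ∀ i, c i / x t i * q t i = (Aᵀ *ᵥ p t) i := fun i => by
    rw [hq]
    exact div_mul_diagonal_inv_div_mulVec (fun i => (hc i).ne') (fun i => (hxpos t i).ne') _ i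
  have hlin : ∑ i, c i * (d i * (q t i - x t i)) / d i = c ⬝ᵥ q t - c ⬝ᵥ x t := by
    rw [← dotProduct_sub]
    exact sum_congr rfl fun i _ => by
      rw [Pi.sub_apply, mul_left_comm, mul_div_cancel_left₀ _ (hd i).ne']
  have hlog : ∑ i ∈ I, c i * xstar i / d i * (d i * (q t i - x t i) / x t i)
      = b ⬝ᵥ p t - c ⬝ᵥ xstar :=
    calc _ = ∑ i ∈ I, xstar i * (Aᵀ *ᵥ p t - c) i := sum_congr rfl fun i _ => by
            rw [Pi.sub_apply, ← hflow i]
            field_simp [(hd i).ne', (hxpos t i).ne']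
      _ = xstar ⬝ᵥ (Aᵀ *ᵥ p t - c) := sum_mul_eq_dotProduct_of_support hI _
      _ = b ⬝ᵥ p t - c ⬝ᵥ xstar := by
            rw [dotProduct_sub, dotProduct_mulVec, vecMul_transpose, hxstar_feas,
              dotProduct_comm xstar c]
  rw [show (fun s => V (x s)) = fun s => physarumLyapunov c d xstar I (x s) from
    funext fun s => hV (x s)]
  convert hasDerivAt_physarumLyapunov (hode t) fun i _ => (hxpos t i).ne' using 1
  rw [hlin, hlog]
  ring

theorem stmt_10 {n m : ℕ} (A : Matrix (Fin n) (Fin m) ℝ) (b : Fin n → ℝ)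
    (c d : Fin m → ℝ) (hc : ∀ i, 0 < c i) (hd : ∀ i, 0 < d i) (hA : A.rank = n)
    (xstar : Fin m → ℝ) (hxstar_nonneg : ∀ i, 0 ≤ xstar i)
    (hxstar_feas : A *ᵥ xstar = b)
    (hxstar_opt : ∀ y : Fin m → ℝ, A *ᵥ y = b → (∀ i, 0 ≤ y i) → c ⬝ᵥ xstar ≤ c ⬝ᵥ y)
    (I : Finset (Fin m)) (hI : ∀ i, i ∈ I ↔ xstar i ≠ 0)
    (x : ℝ → (Fin m → ℝ)) (hxpos : ∀ t, ∀ i, 0 < x t i)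
    (p : ℝ → (Fin n → ℝ)) (q : ℝ → (Fin m → ℝ))
    (hp : ∀ t, p t = (A * (Matrix.diagonal fun i => (c i / x t i)⁻¹) * Aᵀ)⁻¹ *ᵥ b)
    (hq : ∀ t, q t = (Matrix.diagonal fun i => (c i / x t i)⁻¹) *ᵥ (Aᵀ *ᵥ p t))
    (hode : ∀ t, HasDerivAt x (fun i => d i * (q t i - x t i)) t)
    (V : (Fin m → ℝ) → ℝ)
    (hV : ∀ y : Fin m → ℝ,
      V y = 2 * ∑ i, c i * y i / d i - ∑ i ∈ I, (c i * xstar i / d i) * Real.log (y i)) :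
    ∀ t, HasDerivAt (fun s => V (x s))
      (2 * (c ⬝ᵥ q t - c ⬝ᵥ x t) + c ⬝ᵥ xstar - b ⬝ᵥ p t) t :=
  stmt_10_general A b c d hc hd xstar hxstar_feas I hI x hxpos p q hq hode V hV
end

section
/- Let x : [0,∞) → G be a solution of a dynamical system ẋ = f(x) with f continuous, and V : G → ℝ a C¹ function with V̇(x(t)) ≤ 0 for all t and V(x(t)) bounded below. If p is a positive limit point of the trajectory (i.e., x(tₙ) → p for some tₙ → ∞) lying in G, then V̇(p) = 0. -/
/-!
Along the trajectory `V ∘ x` is antitone, and `V (x (tₙ)) → V p`, so `V (x t)` decreases to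
`V p` and never drops below it. Continuity gives `V̇ p ≤ 0`. If `V̇ p < 0`, then `V̇ < -ε` and
`‖f‖ < M` on a ball around `p`; a trajectory entering the half ball cannot leave the ball for a
time `h` independent of the entry point, so during that time `V` drops by `ε h`. Entering close
enough to `p` at a time `tₙ` with `V (x tₙ) < V p + ε h` then pushes `V` below `V p`.
-/

open Set Filter Topology Metric

variable {E : Type*} [NormedAddCommGroup E] [NormedSpace ℝ E]

theorem image_sub_le_mul_sub_of_hasDerivAt_le {g g' : ℝ → ℝ} {a b C : ℝ} (hab : a ≤ b)
    (hg : ∀ t ∈ Icc a b, HasDerivAt g (g' t) t) (hle : ∀ t ∈ Icc a b, g' t ≤ C) :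
    g b - g a ≤ C * (b - a) := by
  have := image_le_of_deriv_right_le_deriv_boundary (f := g) (B := fun t => g a + C * (t - a))
    (fun t ht => (hg t ht).continuousAt.continuousWithinAt)
    (fun t ht => (hg t (Ico_subset_Icc_self ht)).hasDerivWithinAt) (by simp)
    (by fun_prop)
    (fun t _ => ((((hasDerivAt_id t).sub_const a).const_mul C).const_add (g a)).hasDerivWithinAt)
    (fun t ht => by simpa using hle t (Ico_subset_Icc_self ht)) ⟨hab, le_rfl⟩
  linarith

theorem norm_sub_le_of_hasDerivAt_of_norm_lt_on_closedBall {x : ℝ → E} {f : E → E} {p : E}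
    {a b r ρ M : ℝ} (hode : ∀ t ∈ Icc a b, HasDerivAt x (f (x t)) t)
    (hf : ∀ y ∈ closedBall p r, ‖f y‖ < M) (hM : 0 ≤ M)
    (hxa : ‖x a - p‖ ≤ ρ) (hρ : ρ + M * (b - a) ≤ r) :
    ∀ t ∈ Icc a b, ‖x t - p‖ ≤ ρ + M * (t - a) := by
  refine image_norm_le_of_norm_deriv_right_lt_deriv_boundary (f := fun t => x t - p)
    (fun t ht => ((hode t ht).continuousAt.sub continuousAt_const).continuousWithinAt)
    (fun t ht => ((hode t (Ico_subset_Icc_self ht)).sub_const p).hasDerivWithinAt)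
    (by simpa using hxa) (fun t => (((hasDerivAt_id t).sub_const a).const_mul M).const_add ρ) ?_
  intro t ht heq
  have hxt : x t ∈ closedBall p r := by
    rw [mem_closedBall_iff_norm, heq]
    nlinarith [ht.2.le]
  simpa using hf _ hxt

theorem antitoneOn_comp_of_fderiv_nonpos {x : ℝ → E} {f : E → E} {V : E → ℝ} {T : ℝ}
    (hV : Differentiable ℝ V) (hode : ∀ t, T ≤ t → HasDerivAt x (f (x t)) t)
    (hVdot : ∀ t, T ≤ t → fderiv ℝ V (x t) (f (x t)) ≤ 0) :
    AntitoneOn (fun t => V (x t)) (Ici T) := by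
  have hderiv (t : ℝ) (ht : T ≤ t) :
      HasDerivAt (fun s => V (x s)) (fderiv ℝ V (x t) (f (x t))) t :=
    (hV _).hasFDerivAt.comp_hasDerivAt t (hode t ht)
  refine antitoneOn_of_hasDerivWithinAt_nonpos (f' := fun t => fderiv ℝ V (x t) (f (x t)))
    (convex_Ici T)
    (fun t ht => (hderiv t ht).continuousAt.continuousWithinAt) (fun t ht => ?_) (fun t ht => ?_)
  all_goals rw [interior_Ici] at ht
  · exact (hderiv t ht.le).hasDerivWithinAt
  · exact hVdot t ht.le

theorem AntitoneOn.le_of_tendsto_comp {ι : Type*} {l : Filter ι} [l.NeBot] {g : ℝ → ℝ}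
    {T L t : ℝ} (hg : AntitoneOn g (Ici T)) {tn : ι → ℝ} (htn : Tendsto tn l atTop)
    (hlim : Tendsto (fun n => g (tn n)) l (𝓝 L)) (ht : T ≤ t) : L ≤ g t :=
  le_of_tendsto hlim <| by
    filter_upwards [htn.eventually_ge_atTop t] with n hn using hg ht (ht.trans hn) hn

theorem exists_uniform_decrease_of_fderiv_apply_neg {x : ℝ → E} {f : E → E} {V : E → ℝ}
    {p : E} {T : ℝ} (hV : Differentiable ℝ V) (hode : ∀ t, T ≤ t → HasDerivAt x (f (x t)) t)
    (hf : ContinuousAt f p) (hVdot : ContinuousAt (fun y => fderiv ℝ V y (f y)) p)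
    (hp : fderiv ℝ V p (f p) < 0) :
    ∃ ρ > 0, ∃ h > 0, ∃ η > 0,
      ∀ a, T ≤ a → x a ∈ closedBall p ρ → V (x (a + h)) ≤ V (x a) - η := by
  obtain ⟨ε, hε, hpε⟩ : ∃ ε > 0, fderiv ℝ V p (f p) < -ε :=
    ⟨_, half_pos (neg_pos.2 hp), by linarith⟩
  obtain ⟨M, hM, hfpM⟩ : ∃ M > 0, ‖f p‖ < M := ⟨‖f p‖ + 1, by positivity, by linarith⟩
  obtain ⟨r, hr, hball⟩ :
      ∃ r > 0, ∀ y ∈ closedBall p r, fderiv ℝ V y (f y) < -ε ∧ ‖f y‖ < M :=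
    nhds_basis_closedBall.eventually_iff.1 <|
      (hVdot.eventually (gt_mem_nhds hpε)).and (hf.norm.eventually (gt_mem_nhds hfpM))
  obtain ⟨h, hh, hMh⟩ : ∃ h > 0, M * h = r / 2 := ⟨r / (2 * M), by positivity, by field_simp⟩
  refine ⟨r / 2, by positivity, h, hh, ε * h, by positivity, fun a ha hxa => ?_⟩
  have hstay := norm_sub_le_of_hasDerivAt_of_norm_lt_on_closedBall (b := a + h)
    (fun t ht => hode t (ha.trans ht.1)) (fun y hy => (hball y hy).2) hM.le
    (mem_closedBall_iff_norm.1 hxa) (by rw [add_sub_cancel_left, hMh]; linarith)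
  have hdec := image_sub_le_mul_sub_of_hasDerivAt_le (g := fun t => V (x t)) (C := -ε)
    (by linarith) (fun t ht => (hV _).hasFDerivAt.comp_hasDerivAt t (hode t (ha.trans ht.1)))
    fun t ht => (hball _ <| mem_closedBall_iff_norm.2 <| (hstay t ht).trans <| by
      nlinarith [ht.2]).1.le
  simp only [add_sub_cancel_left] at hdec
  linarith

theorem stmt_18_general {m : ℕ}
    (f : (Fin m → ℝ) → (Fin m → ℝ)) (hf : Continuous f)
    (V : (Fin m → ℝ) → ℝ) (hV : ContDiff ℝ 1 V)
    (x : ℝ → (Fin m → ℝ))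
    (hode : ∀ t : ℝ, 0 ≤ t → HasDerivAt x (f (x t)) t)
    (hVdot : ∀ t : ℝ, 0 ≤ t → fderiv ℝ V (x t) (f (x t)) ≤ 0)
    (p : Fin m → ℝ)
    (tn : ℕ → ℝ)
    (htn : Filter.Tendsto tn Filter.atTop Filter.atTop)
    (hlim : Filter.Tendsto (fun n => x (tn n)) Filter.atTop (nhds p)) :
    fderiv ℝ V p (f p) = 0 := by
  have hVd : Differentiable ℝ V := hV.differentiable one_ne_zero
  have hVdot_cont : Continuous fun y => fderiv ℝ V y (f y) :=
    (hV.continuous_fderiv one_ne_zero).clm_apply hf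
  have hVx_lim : Tendsto (fun n => V (x (tn n))) atTop (𝓝 (V p)) :=
    (hV.continuous.tendsto p).comp hlim
  have hVp_le : ∀ t, 0 ≤ t → V p ≤ V (x t) := fun t ht =>
    (antitoneOn_comp_of_fderiv_nonpos hVd hode hVdot).le_of_tendsto_comp htn hVx_lim ht
  have hVdot_p : fderiv ℝ V p (f p) ≤ 0 :=
    le_of_tendsto ((hVdot_cont.tendsto p).comp hlim) <| by
      filter_upwards [htn.eventually_ge_atTop 0] with n hn using hVdot _ hn
  refine hVdot_p.antisymm (not_lt.1 fun hneg => ?_)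
  obtain ⟨ρ, hρ, h, hh, η, hη, hdec⟩ := exists_uniform_decrease_of_fderiv_apply_neg hVd hode
    hf.continuousAt hVdot_cont.continuousAt hneg
  obtain ⟨n, hn, hxn, hVn⟩ := (htn.eventually_ge_atTop 0 |>.and <|
    (hlim.eventually (closedBall_mem_nhds p hρ)).and
      (hVx_lim.eventually (gt_mem_nhds (lt_add_of_pos_right (V p) hη)))).exists
  linarith [hdec _ hn hxn, hVp_le (tn n + h) (by linarith)]

theorem stmt_18 {m : ℕ} (G : Set (Fin m → ℝ))
    (f : (Fin m → ℝ) → (Fin m → ℝ)) (hf : Continuous f)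
    (V : (Fin m → ℝ) → ℝ) (hV : ContDiff ℝ 1 V)
    (x : ℝ → (Fin m → ℝ)) (hxG : ∀ t : ℝ, 0 ≤ t → x t ∈ G)
    (hode : ∀ t : ℝ, 0 ≤ t → HasDerivAt x (f (x t)) t)
    (hVdot : ∀ t : ℝ, 0 ≤ t → fderiv ℝ V (x t) (f (x t)) ≤ 0)
    (C : ℝ) (hbelow : ∀ t : ℝ, 0 ≤ t → C ≤ V (x t))
    (p : Fin m → ℝ) (hpG : p ∈ G)
    (tn : ℕ → ℝ) (htn_nonneg : ∀ n, 0 ≤ tn n)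
    (htn : Filter.Tendsto tn Filter.atTop Filter.atTop)
    (hlim : Filter.Tendsto (fun n => x (tn n)) Filter.atTop (nhds p)) :
    fderiv ℝ V p (f p) = 0 :=
  stmt_18_general f hf V hV x hode hVdot p tn htn hlim
end
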